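/- Let (Ω, ℱ, ℙ) be a probability space and let X : Ω → ℝ^{n×m} and Y : Ω → ℝ^{q×m} be measurable matrix-valued random variables such that XXᵀ, YYᵀ and XYᵀ are Bochner integrable, and such that 𝔼[YYᵀ] is positive definite. Then ‖𝔼[XYᵀ]‖ ≤ ‖𝔼[XXᵀ]‖^{1/2} · ‖𝔼[YYᵀ]‖^{1/2}. -/

import Mathlib

open Matrix MeasureTheory

/-- The spectral (ℓ² operator) norm of a real matrix. -/
noncomputable def matrixSpectralNorm {m n : ℕ} (A : Matrix (Fin m) (Fin n) ℝ) : ℝ :=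
  ‖LinearMap.toContinuousLinearMap (Matrix.toEuclideanLin A)‖

/-- The entrywise expectation of a matrix-valued random variable. -/
noncomputable def matExp {m n : ℕ} {Ω : Type*} [MeasurableSpace Ω] (ℙ : Measure Ω)
    (M : Ω → Matrix (Fin m) (Fin n) ℝ) : Matrix (Fin m) (Fin n) ℝ :=
  Matrix.of fun i j => ∫ ω, M ω i j ∂ℙ

section Aux

variable {Ω : Type*} [MeasurableSpace Ω] {ℙ : Measure Ω}

lemma integrable_dot {a b : ℕ} {M : Ω → Matrix (Fin a) (Fin b) ℝ}
    (hM : ∀ i j, Integrable (fun ω => M ω i j) ℙ) (u : Fin a → ℝ) (v : Fin b → ℝ) :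
    Integrable (fun ω => u ⬝ᵥ (M ω *ᵥ v)) ℙ := by
  simp only [dotProduct, mulVec, Finset.mul_sum]
  exact integrable_finset_sum _ fun i _ =>
    integrable_finset_sum _ fun j _ => ((hM i j).mul_const _).const_mul _

lemma dot_matExp {a b : ℕ} {M : Ω → Matrix (Fin a) (Fin b) ℝ}
    (hM : ∀ i j, Integrable (fun ω => M ω i j) ℙ) (u : Fin a → ℝ) (v : Fin b → ℝ) :
    u ⬝ᵥ (matExp ℙ M *ᵥ v) = ∫ ω, u ⬝ᵥ (M ω *ᵥ v) ∂ℙ := by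
  simp only [dotProduct, mulVec, matExp, Matrix.of_apply, Finset.mul_sum]
  rw [integral_finset_sum _ fun i _ =>
    integrable_finset_sum _ fun j _ => ((hM i j).mul_const _).const_mul _]
  refine Finset.sum_congr rfl fun i _ => ?_
  rw [integral_finset_sum _ fun j _ => ((hM i j).mul_const _).const_mul _]
  refine Finset.sum_congr rfl fun j _ => ?_
  rw [MeasureTheory.integral_const_mul, MeasureTheory.integral_mul_const]

lemma dot_split {a b c : ℕ} (P : Matrix (Fin a) (Fin c) ℝ) (Q : Matrix (Fin b) (Fin c) ℝ)
    (u : Fin a → ℝ) (v : Fin b → ℝ) :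
    u ⬝ᵥ ((P * Qᵀ) *ᵥ v) = (Pᵀ *ᵥ u) ⬝ᵥ (Qᵀ *ᵥ v) := by
  rw [← mulVec_mulVec, Matrix.dotProduct_mulVec, mulVec_transpose, mulVec_transpose]

lemma dot_self_nonneg {c : ℕ} (w : Fin c → ℝ) : 0 ≤ w ⬝ᵥ w :=
  Finset.sum_nonneg fun i _ => mul_self_nonneg _

lemma dot_le_sqrt {c : ℕ} (w z : Fin c → ℝ) :
    w ⬝ᵥ z ≤ Real.sqrt (w ⬝ᵥ w) * Real.sqrt (z ⬝ᵥ z) := by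
  have h : ∀ x y : Fin c → ℝ,
      (inner ℝ ((WithLp.equiv 2 (Fin c → ℝ)).symm x) ((WithLp.equiv 2 (Fin c → ℝ)).symm y) : ℝ)
        = x ⬝ᵥ y := by
    intro x y
    simp [PiLp.inner_apply, RCLike.inner_apply, dotProduct, mul_comm]
  calc w ⬝ᵥ z = inner ℝ ((WithLp.equiv 2 (Fin c → ℝ)).symm w)
        ((WithLp.equiv 2 (Fin c → ℝ)).symm z) := (h w z).symm
    _ ≤ ‖(WithLp.equiv 2 (Fin c → ℝ)).symm w‖ * ‖(WithLp.equiv 2 (Fin c → ℝ)).symm z‖ :=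
        real_inner_le_norm _ _
    _ = Real.sqrt (w ⬝ᵥ w) * Real.sqrt (z ⬝ᵥ z) := by
        rw [norm_eq_sqrt_real_inner, norm_eq_sqrt_real_inner, h, h]

lemma quadform_le {a : ℕ} (B : Matrix (Fin a) (Fin a) ℝ) (u : Fin a → ℝ) :
    u ⬝ᵥ (B *ᵥ u) ≤ matrixSpectralNorm B * (u ⬝ᵥ u) := by
  set u' : EuclideanSpace ℝ (Fin a) := (WithLp.equiv 2 (Fin a → ℝ)).symm u with hu'
  have h1 : u ⬝ᵥ (B *ᵥ u) = inner ℝ (Matrix.toEuclideanLin B u') u' := by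
    rw [Matrix.toEuclideanLin_apply]
    simp [PiLp.inner_apply, RCLike.inner_apply, dotProduct, u', mul_comm]
  have h2 : (u ⬝ᵥ u) = ‖u'‖ ^ 2 := by
    rw [← real_inner_self_eq_norm_sq]
    simp only [PiLp.inner_apply, WithLp.equiv_symm_apply, RCLike.inner_apply, conj_trivial, dotProduct, u']
  rw [h1, h2]
  calc (inner ℝ (Matrix.toEuclideanLin B u') u' : ℝ)
      ≤ ‖Matrix.toEuclideanLin B u'‖ * ‖u'‖ := real_inner_le_norm _ _
    _ ≤ matrixSpectralNorm B * ‖u'‖ * ‖u'‖ := by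
        have := (LinearMap.toContinuousLinearMap (Matrix.toEuclideanLin B)).le_opNorm u'
        simp only [LinearMap.coe_toContinuousLinearMap'] at this
        exact mul_le_mul_of_nonneg_right this (norm_nonneg _)
    _ = matrixSpectralNorm B * ‖u'‖ ^ 2 := by ring

lemma integral_cs {f g : Ω → ℝ} (hf0 : ∀ ω, 0 ≤ f ω) (hg0 : ∀ ω, 0 ≤ g ω)
    (hfm : AEStronglyMeasurable f ℙ) (hgm : AEStronglyMeasurable g ℙ)
    (hf2 : Integrable (fun ω => f ω ^ 2) ℙ) (hg2 : Integrable (fun ω => g ω ^ 2) ℙ) :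
    ∫ ω, f ω * g ω ∂ℙ ≤ Real.sqrt (∫ ω, f ω ^ 2 ∂ℙ) * Real.sqrt (∫ ω, g ω ^ 2 ∂ℙ) := by
  have hpq : Real.HolderConjugate 2 2 := Real.HolderConjugate.two_two
  have hfL : MemLp f (ENNReal.ofReal 2) ℙ := by
    rw [show ENNReal.ofReal 2 = 2 by norm_num]
    exact (memLp_two_iff_integrable_sq hfm).2 hf2
  have hgL : MemLp g (ENNReal.ofReal 2) ℙ := by
    rw [show ENNReal.ofReal 2 = 2 by norm_num]
    exact (memLp_two_iff_integrable_sq hgm).2 hg2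
  have := MeasureTheory.integral_mul_le_Lp_mul_Lq_of_nonneg hpq
    (Filter.Eventually.of_forall hf0) (Filter.Eventually.of_forall hg0) hfL hgL
  calc ∫ ω, f ω * g ω ∂ℙ ≤ (∫ a, f a ^ (2:ℝ) ∂ℙ) ^ (1/(2:ℝ)) * (∫ a, g a ^ (2:ℝ) ∂ℙ) ^ (1/(2:ℝ)) :=
        this
    _ = Real.sqrt (∫ ω, f ω ^ 2 ∂ℙ) * Real.sqrt (∫ ω, g ω ^ 2 ∂ℙ) := by
        have hf' : ∀ a, f a ^ (2:ℝ) = f a ^ (2:ℕ) := fun a => by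
          rw [← Real.rpow_natCast]; norm_num
        have hg' : ∀ a, g a ^ (2:ℝ) = g a ^ (2:ℕ) := fun a => by
          rw [← Real.rpow_natCast]; norm_num
        simp_rw [hf', hg']
        rw [← Real.sqrt_eq_rpow, ← Real.sqrt_eq_rpow]

lemma norm_sq_eq_dot {c : ℕ} (w : Fin c → ℝ) :
    w ⬝ᵥ w = ‖(WithLp.equiv 2 (Fin c → ℝ)).symm w‖ ^ 2 := by
  rw [← real_inner_self_eq_norm_sq]
  simp only [PiLp.inner_apply, WithLp.equiv_symm_apply, RCLike.inner_apply, conj_trivial, dotProduct]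

end Aux

/-- Cauchy–Schwarz inequality for random matrices:
`‖𝔼[XYᵀ]‖ ≤ ‖𝔼[XXᵀ]‖^{1/2} · ‖𝔼[YYᵀ]‖^{1/2}` whenever `𝔼[YYᵀ] ≻ 0` and the relevant
second moments exist. -/
theorem cauchy_schwarz_random_matrices {n m q : ℕ}
    {Ω : Type*} [MeasurableSpace Ω] (ℙ : Measure Ω) [IsProbabilityMeasure ℙ]
    (X : Ω → Matrix (Fin n) (Fin m) ℝ) (Y : Ω → Matrix (Fin q) (Fin m) ℝ)
    (hXmeas : ∀ i j, Measurable fun ω => X ω i j)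
    (hYmeas : ∀ i j, Measurable fun ω => Y ω i j)
    (hXX : ∀ i j, Integrable (fun ω => (X ω * (X ω)ᵀ) i j) ℙ)
    (hYY : ∀ i j, Integrable (fun ω => (Y ω * (Y ω)ᵀ) i j) ℙ)
    (hXY : ∀ i j, Integrable (fun ω => (X ω * (Y ω)ᵀ) i j) ℙ)
    (hpos : (matExp ℙ (fun ω => Y ω * (Y ω)ᵀ)).PosDef) :
    matrixSpectralNorm (matExp ℙ (fun ω => X ω * (Y ω)ᵀ)) ≤
      Real.sqrt (matrixSpectralNorm (matExp ℙ (fun ω => X ω * (X ω)ᵀ))) *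
        Real.sqrt (matrixSpectralNorm (matExp ℙ (fun ω => Y ω * (Y ω)ᵀ))) := by
  classical
  set B := matExp ℙ (fun ω => X ω * (X ω)ᵀ) with hBdef
  set C := matExp ℙ (fun ω => Y ω * (Y ω)ᵀ) with hCdef
  set A := matExp ℙ (fun ω => X ω * (Y ω)ᵀ) with hAdef
  have hsB : (0:ℝ) ≤ matrixSpectralNorm B := norm_nonneg _
  have hsC : (0:ℝ) ≤ matrixSpectralNorm C := norm_nonneg _
  show ‖LinearMap.toContinuousLinearMap (Matrix.toEuclideanLin A)‖ ≤ _
  refine ContinuousLinearMap.opNorm_le_bound _ (by positivity) fun v => ?_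
  simp only [LinearMap.coe_toContinuousLinearMap']
  rw [Matrix.toEuclideanLin_apply]
  set v0 : Fin q → ℝ := (WithLp.equiv 2 (Fin q → ℝ)) v with hv0
  set u0 : Fin n → ℝ := A *ᵥ v0 with hu0
  set u : EuclideanSpace ℝ (Fin n) := (WithLp.equiv 2 (Fin n → ℝ)).symm u0 with hu
  have hvv : v0 ⬝ᵥ v0 = ‖v‖ ^ 2 := by
    have := norm_sq_eq_dot v0
    rwa [show (WithLp.equiv 2 (Fin q → ℝ)).symm v0 = v from rfl] at this
  have huu : u0 ⬝ᵥ u0 = ‖u‖ ^ 2 := norm_sq_eq_dot u0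
  set f : Ω → ℝ := fun ω => Real.sqrt (((X ω)ᵀ *ᵥ u0) ⬝ᵥ ((X ω)ᵀ *ᵥ u0)) with hf
  set g : Ω → ℝ := fun ω => Real.sqrt (((Y ω)ᵀ *ᵥ v0) ⬝ᵥ ((Y ω)ᵀ *ᵥ v0)) with hg
  have hf0 : ∀ ω, 0 ≤ f ω := fun ω => Real.sqrt_nonneg _
  have hg0 : ∀ ω, 0 ≤ g ω := fun ω => Real.sqrt_nonneg _
  have hfsq : ∀ ω, f ω ^ 2 = u0 ⬝ᵥ ((X ω * (X ω)ᵀ) *ᵥ u0) := fun ω => by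
    rw [hf, Real.sq_sqrt (dot_self_nonneg _), ← dot_split]
  have hgsq : ∀ ω, g ω ^ 2 = v0 ⬝ᵥ ((Y ω * (Y ω)ᵀ) *ᵥ v0) := fun ω => by
    rw [hg, Real.sq_sqrt (dot_self_nonneg _), ← dot_split]
  have hfmeas : Measurable f := by
    apply Real.continuous_sqrt.measurable.comp
    apply Finset.measurable_sum _ fun j _ => ?_
    simp only [mulVec, dotProduct, Matrix.transpose_apply]
    exact (Finset.measurable_sum _ fun i _ => (hXmeas i j).mul_const _).mul
      (Finset.measurable_sum _ fun i _ => (hXmeas i j).mul_const _)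
  have hgmeas : Measurable g := by
    apply Real.continuous_sqrt.measurable.comp
    apply Finset.measurable_sum _ fun j _ => ?_
    simp only [mulVec, dotProduct, Matrix.transpose_apply]
    exact (Finset.measurable_sum _ fun i _ => (hYmeas i j).mul_const _).mul
      (Finset.measurable_sum _ fun i _ => (hYmeas i j).mul_const _)
  have hf2 : Integrable (fun ω => f ω ^ 2) ℙ := by
    simp_rw [hfsq]; exact integrable_dot hXX u0 u0
  have hg2 : Integrable (fun ω => g ω ^ 2) ℙ := by
    simp_rw [hgsq]; exact integrable_dot hYY v0 v0
  have hfg_int : Integrable (fun ω => f ω * g ω) ℙ := by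
    refine Integrable.mono (hf2.add hg2) (hfmeas.mul hgmeas).aestronglyMeasurable
      (Filter.Eventually.of_forall fun ω => ?_)
    simp only [Pi.add_apply]
    rw [Real.norm_of_nonneg (mul_nonneg (hf0 ω) (hg0 ω)), Real.norm_of_nonneg (by positivity)]
    nlinarith [sq_nonneg (f ω - g ω), hf0 ω, hg0 ω]
  have hintf2 : ∫ ω, f ω ^ 2 ∂ℙ = u0 ⬝ᵥ (B *ᵥ u0) := by
    simp_rw [hfsq]; rw [hBdef, dot_matExp hXX]
  have hintg2 : ∫ ω, g ω ^ 2 ∂ℙ = v0 ⬝ᵥ (C *ᵥ v0) := by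
    simp_rw [hgsq]; rw [hCdef, dot_matExp hYY]
  have key : ‖u‖ ^ 2 ≤ Real.sqrt (matrixSpectralNorm B) * ‖u‖ *
      (Real.sqrt (matrixSpectralNorm C) * ‖v‖) := by
    calc ‖u‖ ^ 2 = u0 ⬝ᵥ (A *ᵥ v0) := by rw [← huu, hu0]
      _ = ∫ ω, u0 ⬝ᵥ ((X ω * (Y ω)ᵀ) *ᵥ v0) ∂ℙ := by rw [hAdef, dot_matExp hXY]
      _ ≤ ∫ ω, f ω * g ω ∂ℙ := by
          refine integral_mono (integrable_dot hXY u0 v0) hfg_int fun ω => ?_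
          rw [dot_split]; exact dot_le_sqrt _ _
      _ ≤ Real.sqrt (∫ ω, f ω ^ 2 ∂ℙ) * Real.sqrt (∫ ω, g ω ^ 2 ∂ℙ) :=
          integral_cs hf0 hg0 hfmeas.aestronglyMeasurable hgmeas.aestronglyMeasurable hf2 hg2
      _ ≤ Real.sqrt (matrixSpectralNorm B * ‖u‖ ^ 2) * Real.sqrt (matrixSpectralNorm C * ‖v‖ ^ 2) := by
          rw [hintf2, hintg2]
          refine mul_le_mul (Real.sqrt_le_sqrt ?_) (Real.sqrt_le_sqrt ?_)
            (Real.sqrt_nonneg _) (Real.sqrt_nonneg _)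
          · rw [← huu]; exact quadform_le B u0
          · rw [← hvv]; exact quadform_le C v0
      _ = Real.sqrt (matrixSpectralNorm B) * ‖u‖ * (Real.sqrt (matrixSpectralNorm C) * ‖v‖) := by
          rw [Real.sqrt_mul hsB, Real.sqrt_mul hsC, Real.sqrt_sq (norm_nonneg u),
            Real.sqrt_sq (norm_nonneg v)]
  change ‖u‖ ≤ _
  rcases eq_or_lt_of_le (norm_nonneg u) with h0 | h0
  · rw [← h0]; positivity
  · have h5 : ‖u‖ * ‖u‖ ≤ (Real.sqrt (matrixSpectralNorm B) * Real.sqrt (matrixSpectralNorm C) * ‖v‖) * ‖u‖ := by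
      nlinarith [key]
    exact le_of_mul_le_mul_right h5 h0
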